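/- In the spatially homogeneous three-temperature exchange system with nonnegative coupling coefficients Λ_is, Λ_rs, Λ_ir ≥ 0 and positive heat capacities, the minimum initial temperature is a lower bound and the maximum initial temperature is an upper bound for all three temperatures at all later times: if m ≤ T_i(0), T_r(0), T_s(0) ≤ M then m ≤ T_i(t), T_r(t), T_s(t) ≤ M for all t ≥ 0. -/

import Mathlib

/-!
In a cooperative linear system `f i' = ∑ j, a i j * (f j - f i)` with `a i j ≥ 0`, a component
attaining the maximum of all components has nonpositive derivative. Hence the maximum, although
not differentiable, has nonpositive upper right Dini derivative and never exceeds its initial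
value. The lower bound is the same statement for `-f`, which solves the same system.
-/

open Filter Topology Set Finset

lemma ContinuousAt.eq_of_frequently_eq_nhdsGT {f g : ℝ → ℝ} {x : ℝ} (hf : ContinuousAt f x)
    (hg : ContinuousAt g x) (h : ∃ᶠ z in 𝓝[>] x, f z = g z) : f x = g x :=
  tendsto_nhds_unique_of_frequently_eq (hf.tendsto.mono_left nhdsWithin_le_nhds)
    (hg.tendsto.mono_left nhdsWithin_le_nhds) h

lemma HasDerivAt.frequently_slope_lt_of_frequently_eq {g F : ℝ → ℝ} {g' x r : ℝ}
    (hg : HasDerivAt g g' x) (hF : ContinuousAt F x) (hgF : ∃ᶠ z in 𝓝[>] x, g z = F z)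
    (hr : g' < r) : ∃ᶠ z in 𝓝[>] x, slope F x z < r := by
  have hx : g x = F x := hg.continuousAt.eq_of_frequently_eq_nhdsGT hF hgF
  have hslope : ∀ᶠ z in 𝓝[>] x, slope g x z < r :=
    ((hasDerivAt_iff_tendsto_slope.1 hg).mono_left
      (nhdsWithin_mono x fun z hz => hz.ne')).eventually_lt_const hr
  refine (hgF.and_eventually hslope).mono fun z ⟨hz, hlt⟩ => ?_
  rwa [slope_def_field, ← hz, ← hx, ← slope_def_field]

theorem le_of_deriv_nonpos_at_max {ι : Type*} [Fintype ι] [Nonempty ι]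
    {f f' : ι → ℝ → ℝ} {M : ℝ}
    (hf : ∀ i, ∀ t ≥ 0, HasDerivAt (f i) (f' i t) t)
    (hmax : ∀ i, ∀ t ≥ 0, (∀ j, f j t ≤ f i t) → f' i t ≤ 0)
    (h0 : ∀ i, f i 0 ≤ M) : ∀ i, ∀ t ≥ 0, f i t ≤ M := by
  intro i b hb
  set F : ℝ → ℝ := fun t => univ.sup' univ_nonempty fun j => f j t
  have hle : ∀ j t, f j t ≤ F t := fun j t => le_sup' (fun j => f j t) (mem_univ j)
  have hF : ∀ t ≥ 0, ContinuousAt F t := fun t ht =>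
    ContinuousAt.finset_sup'_apply univ_nonempty fun j _ => (hf j t ht).continuousAt
  have hFM : ∀ t ∈ Icc 0 b, F t ≤ M := by
    refine image_le_of_liminf_slope_right_le_deriv_boundary (B := fun _ => M) (B' := fun _ => 0)
      (fun t ht => (hF t ht.1).continuousWithinAt) (sup'_le _ _ fun j _ => h0 j)
      continuousOn_const (fun t _ => hasDerivWithinAt_const t _ M) fun t ht r hr => ?_
    have hattained : ∃ᶠ z in 𝓝[>] t, ∃ j, f j z = F z :=
      Frequently.of_forall fun z =>
        (exists_mem_eq_sup' univ_nonempty fun j => f j z).imp fun j h => h.2.symm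
    obtain ⟨j, hj⟩ := frequently_exists.1 hattained
    have hjmax : ∀ k, f k t ≤ f j t := by
      rw [(hf j t ht.1).continuousAt.eq_of_frequently_eq_nhdsGT (hF t ht.1) hj]
      exact fun k => hle k t
    exact (hf j t ht.1).frequently_slope_lt_of_frequently_eq (hF t ht.1) hj
      ((hmax j t ht.1 hjmax).trans_lt hr)
  exact (hle i b).trans (hFM b ⟨hb, le_rfl⟩)

section Cooperative

variable {ι : Type*} [Fintype ι] [Nonempty ι] {a : ι → ι → ℝ} {f : ι → ℝ → ℝ}

theorem le_of_hasDerivAt_cooperative (ha : ∀ i j, 0 ≤ a i j)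
    (hf : ∀ i, ∀ t ≥ 0, HasDerivAt (f i) (∑ j, a i j * (f j t - f i t)) t)
    {M : ℝ} (h0 : ∀ i, f i 0 ≤ M) : ∀ i, ∀ t ≥ 0, f i t ≤ M :=
  le_of_deriv_nonpos_at_max hf
    (fun i _ _ hmax => sum_nonpos fun j _ =>
      mul_nonpos_of_nonneg_of_nonpos (ha i j) (sub_nonpos.2 (hmax j))) h0

theorem mem_Icc_of_hasDerivAt_cooperative (ha : ∀ i j, 0 ≤ a i j)
    (hf : ∀ i, ∀ t ≥ 0, HasDerivAt (f i) (∑ j, a i j * (f j t - f i t)) t)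
    {m M : ℝ} (h0 : ∀ i, f i 0 ∈ Icc m M) : ∀ i, ∀ t ≥ 0, f i t ∈ Icc m M := by
  have upper := le_of_hasDerivAt_cooperative ha hf fun i => (h0 i).2
  have hneg : ∀ i, ∀ t ≥ 0,
      HasDerivAt (fun t => -f i t) (∑ j, a i j * (-f j t - -f i t)) t := fun i t ht =>
    (hf i t ht).neg.congr_deriv (by rw [← sum_neg_distrib]; congr 1; ext j; ring)
  have lower := le_of_hasDerivAt_cooperative (f := fun i t => -f i t) ha hneg
    fun i => neg_le_neg (h0 i).1
  exact fun i t ht => ⟨neg_le_neg_iff.1 (lower i t ht), upper i t ht⟩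

end Cooperative

theorem three_temperature_comparison_principle
    (Ci Cr Cs Λis Λrs Λir : ℝ)
    (hCi : 0 < Ci) (hCr : 0 < Cr) (hCs : 0 < Cs)
    (hΛis : 0 ≤ Λis) (hΛrs : 0 ≤ Λrs) (hΛir : 0 ≤ Λir)
    (Ti Tr Ts : ℝ → ℝ)
    (hi : ∀ t ≥ 0, HasDerivAt Ti ((Λis * (Ts t - Ti t) + Λir * (Tr t - Ti t)) / Ci) t)
    (hr : ∀ t ≥ 0, HasDerivAt Tr ((Λrs * (Ts t - Tr t) + Λir * (Ti t - Tr t)) / Cr) t)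
    (hs : ∀ t ≥ 0, HasDerivAt Ts ((Λis * (Ti t - Ts t) + Λrs * (Tr t - Ts t)) / Cs) t)
    (m M : ℝ)
    (h0i : m ≤ Ti 0 ∧ Ti 0 ≤ M)
    (h0r : m ≤ Tr 0 ∧ Tr 0 ≤ M)
    (h0s : m ≤ Ts 0 ∧ Ts 0 ≤ M) :
    ∀ t ≥ 0, (m ≤ Ti t ∧ Ti t ≤ M) ∧ (m ≤ Tr t ∧ Tr t ≤ M) ∧
      (m ≤ Ts t ∧ Ts t ≤ M) := by
  let a : Fin 3 → Fin 3 → ℝ :=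
    ![![0, Λir / Ci, Λis / Ci], ![Λir / Cr, 0, Λrs / Cr], ![Λis / Cs, Λrs / Cs, 0]]
  have ha : ∀ i j, 0 ≤ a i j := by
    intro i j; fin_cases i <;> fin_cases j <;> simp [a] <;> positivity
  have hf : ∀ i, ∀ t ≥ 0,
      HasDerivAt (![Ti, Tr, Ts] i) (∑ j, a i j * (![Ti, Tr, Ts] j t - ![Ti, Tr, Ts] i t)) t := by
    intro i t ht
    fin_cases i
    · exact (hi t ht).congr_deriv (by simp [a, Fin.sum_univ_three]; ring)
    · exact (hr t ht).congr_deriv (by simp [a, Fin.sum_univ_three]; ring)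
    · exact (hs t ht).congr_deriv (by simp [a, Fin.sum_univ_three]; ring)
  have h0 : ∀ i, ![Ti, Tr, Ts] i 0 ∈ Icc m M := by
    intro i; fin_cases i
    exacts [h0i, h0r, h0s]
  have hbound := mem_Icc_of_hasDerivAt_cooperative ha hf h0
  exact fun t ht => ⟨hbound 0 t ht, hbound 1 t ht, hbound 2 t ht⟩
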